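/- arXiv:0705.1774 — 2 statements merged into one kernel-verified Lean document; each statement's English description precedes it below -/
import Mathlib

section
/- If f(a,c) = s·ln(m·e^{μa} + n·e^{νc}) + const with s, m, n, μ, ν nonzero constants, then f satisfies the five integrability conditions: f_{aaa} = f_{aa}(f_{ac}/f_c + f_{aa}/f_a), f_{aac} = f_{aa}(f_{cc}/f_c + f_{ac}/f_a), f_{acc} = f_{cc}(f_{cc}/f_c + f_{ac}/f_a) (with appropriate index symmetry), f_{ccc} = f_{cc}(f_{cc}/f_c + f_{ac}/f_a), and f_{aa}·f_{cc} = (f_{ac})². -/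
/-- Partial derivative with respect to the first variable. -/
noncomputable def Dx (f : ℝ → ℝ → ℝ) (a c : ℝ) : ℝ := deriv (fun x => f x c) a

/-- Partial derivative with respect to the second variable. -/
noncomputable def Dy (f : ℝ → ℝ → ℝ) (a c : ℝ) : ℝ := deriv (fun y => f a y) c

/-!
With `G = m e^{μa} + n e^{νc}` and the softmax weights `p = m e^{μa} / G`, `q = n e^{νc} / G`
(so `p + q = 1`) one has `f_a = sμ p`, `f_c = sν q`, `p_a = -q_a = μ pq` and `q_c = -p_c = ν pq`.
So the second derivatives of `f` are `sμ²`, `-sμν`, `sν²` times `pq`, which gives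
`f_aa f_cc = f_ac²`, and the third derivatives are constant multiples of `pq (q - p)`. The other
four identities are then polynomial identities in `p`, `q` once the denominators `f_a = sμ p`
and `f_c = sν q` are cleared.
-/

open Real

noncomputable section

def expSum (m n μ ν a c : ℝ) : ℝ := m * exp (μ * a) + n * exp (ν * c)

def softmaxFst (m n μ ν a c : ℝ) : ℝ := m * exp (μ * a) / expSum m n μ ν a c

def softmaxSnd (m n μ ν a c : ℝ) : ℝ := n * exp (ν * c) / expSum m n μ ν a c

end

lemma Dx_const_mul (k : ℝ) (g : ℝ → ℝ → ℝ) :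
    Dx (fun a c => k * g a c) = fun a c => k * Dx g a c := by
  funext a c
  exact congrFun (deriv_const_mul_field' k) a

lemma Dy_const_mul (k : ℝ) (g : ℝ → ℝ → ℝ) :
    Dy (fun a c => k * g a c) = fun a c => k * Dy g a c := by
  funext a c
  exact congrFun (deriv_const_mul_field' k) c

lemma hasDerivAt_exp_const_mul (k x : ℝ) :
    HasDerivAt (fun t => exp (k * t)) (k * exp (k * x)) x := by
  simpa [mul_comm] using ((hasDerivAt_id x).const_mul k).exp

section Softmax

variable {m n μ ν : ℝ}

lemma hasDerivAt_expSum_left (a c : ℝ) :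
    HasDerivAt (fun x => expSum m n μ ν x c) (μ * (m * exp (μ * a))) a :=
  (((hasDerivAt_exp_const_mul μ a).const_mul m).add_const _).congr_deriv (by ring)

lemma hasDerivAt_expSum_right (a c : ℝ) :
    HasDerivAt (fun y => expSum m n μ ν a y) (ν * (n * exp (ν * c))) c :=
  (((hasDerivAt_exp_const_mul ν c).const_mul n).const_add _).congr_deriv (by ring)

lemma softmaxFst_add_softmaxSnd {a c : ℝ} (hG : expSum m n μ ν a c ≠ 0) :
    softmaxFst m n μ ν a c + softmaxSnd m n μ ν a c = 1 := by
  rw [softmaxFst, softmaxSnd, ← add_div, div_eq_one_iff_eq hG, expSum]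

lemma hasDerivAt_softmaxFst_left {a c : ℝ} (hG : expSum m n μ ν a c ≠ 0) :
    HasDerivAt (fun x => softmaxFst m n μ ν x c)
      (μ * (softmaxFst m n μ ν a c * softmaxSnd m n μ ν a c)) a := by
  refine (((hasDerivAt_exp_const_mul μ a).const_mul m).div
    (hasDerivAt_expSum_left a c) hG).congr_deriv ?_
  rw [softmaxFst, softmaxSnd]
  field_simp
  rw [expSum]
  ring

lemma hasDerivAt_softmaxFst_right {a c : ℝ} (hG : expSum m n μ ν a c ≠ 0) :
    HasDerivAt (fun y => softmaxFst m n μ ν a y)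
      (-ν * (softmaxFst m n μ ν a c * softmaxSnd m n μ ν a c)) c := by
  refine ((hasDerivAt_const c (m * exp (μ * a))).div
    (hasDerivAt_expSum_right a c) hG).congr_deriv ?_
  rw [softmaxFst, softmaxSnd]
  field_simp
  ring

lemma hasDerivAt_softmaxSnd_left {a c : ℝ} (hG : ∀ x, expSum m n μ ν x c ≠ 0) :
    HasDerivAt (fun x => softmaxSnd m n μ ν x c)
      (-μ * (softmaxFst m n μ ν a c * softmaxSnd m n μ ν a c)) a := by
  have hq : (fun x => softmaxSnd m n μ ν x c) = fun x => 1 - softmaxFst m n μ ν x c :=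
    funext fun x => eq_sub_of_add_eq' (softmaxFst_add_softmaxSnd (hG x))
  rw [hq]
  exact ((hasDerivAt_softmaxFst_left (hG a)).const_sub 1).congr_deriv (by ring)

lemma hasDerivAt_softmaxSnd_right {a c : ℝ} (hG : ∀ y, expSum m n μ ν a y ≠ 0) :
    HasDerivAt (fun y => softmaxSnd m n μ ν a y)
      (ν * (softmaxFst m n μ ν a c * softmaxSnd m n μ ν a c)) c := by
  have hq : (fun y => softmaxSnd m n μ ν a y) = fun y => 1 - softmaxFst m n μ ν a y :=
    funext fun y => eq_sub_of_add_eq' (softmaxFst_add_softmaxSnd (hG y))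
  rw [hq]
  exact ((hasDerivAt_softmaxFst_right (hG c)).const_sub 1).congr_deriv (by ring)

lemma Dx_softmaxFst (hG : ∀ a c, expSum m n μ ν a c ≠ 0) :
    Dx (softmaxFst m n μ ν) = fun a c => μ * (softmaxFst m n μ ν a c * softmaxSnd m n μ ν a c) :=
  funext₂ fun a c => (hasDerivAt_softmaxFst_left (hG a c)).deriv

lemma Dy_softmaxFst (hG : ∀ a c, expSum m n μ ν a c ≠ 0) :
    Dy (softmaxFst m n μ ν) =
      fun a c => -ν * (softmaxFst m n μ ν a c * softmaxSnd m n μ ν a c) :=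
  funext₂ fun a c => (hasDerivAt_softmaxFst_right (hG a c)).deriv

lemma Dy_softmaxSnd (hG : ∀ a c, expSum m n μ ν a c ≠ 0) :
    Dy (softmaxSnd m n μ ν) = fun a c => ν * (softmaxFst m n μ ν a c * softmaxSnd m n μ ν a c) :=
  funext₂ fun a c => (hasDerivAt_softmaxSnd_right (c := c) (hG a)).deriv

lemma Dx_softmaxFst_mul_softmaxSnd (hG : ∀ a c, expSum m n μ ν a c ≠ 0) :
    Dx (fun a c => softmaxFst m n μ ν a c * softmaxSnd m n μ ν a c) = fun a c =>
      μ * (softmaxFst m n μ ν a c * softmaxSnd m n μ ν a c *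
        (softmaxSnd m n μ ν a c - softmaxFst m n μ ν a c)) := by
  funext a c
  refine (((hasDerivAt_softmaxFst_left (hG a c)).mul
    (hasDerivAt_softmaxSnd_left (hG · c))).congr_deriv ?_).deriv
  ring

lemma Dy_softmaxFst_mul_softmaxSnd (hG : ∀ a c, expSum m n μ ν a c ≠ 0) :
    Dy (fun a c => softmaxFst m n μ ν a c * softmaxSnd m n μ ν a c) = fun a c =>
      ν * (softmaxFst m n μ ν a c * softmaxSnd m n μ ν a c *
        (softmaxFst m n μ ν a c - softmaxSnd m n μ ν a c)) := by
  funext a c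
  refine (((hasDerivAt_softmaxFst_right (hG a c)).mul
    (hasDerivAt_softmaxSnd_right (hG a))).congr_deriv ?_).deriv
  ring

variable {s K : ℝ} {f : ℝ → ℝ → ℝ}

lemma Dx_eq_of_eq_log_expSum (hG : ∀ a c, expSum m n μ ν a c ≠ 0)
    (hf : ∀ a c, f a c = s * log (expSum m n μ ν a c) + K) :
    Dx f = fun a c => s * μ * softmaxFst m n μ ν a c := by
  funext a c
  have hfun : (fun x => f x c) = fun x => s * log (expSum m n μ ν x c) + K := funext (hf · c)
  rw [Dx, hfun, ((((hasDerivAt_expSum_left a c).log (hG a c)).const_mul s).add_const K).deriv,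
    softmaxFst]
  ring

lemma Dy_eq_of_eq_log_expSum (hG : ∀ a c, expSum m n μ ν a c ≠ 0)
    (hf : ∀ a c, f a c = s * log (expSum m n μ ν a c) + K) :
    Dy f = fun a c => s * ν * softmaxSnd m n μ ν a c := by
  funext a c
  have hfun : (fun y => f a y) = fun y => s * log (expSum m n μ ν a y) + K := funext (hf a)
  rw [Dy, hfun, ((((hasDerivAt_expSum_right a c).log (hG a c)).const_mul s).add_const K).deriv,
    softmaxSnd]
  ring

end Softmax

theorem integrability_conditions_of_log_exp_sum_general
    (s m n μ ν K : ℝ)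
    (f : ℝ → ℝ → ℝ)
    (hf : ∀ a c, f a c = s * Real.log (m * Real.exp (μ * a) + n * Real.exp (ν * c)) + K)
    (hpos : ∀ a c, 0 < m * Real.exp (μ * a) + n * Real.exp (ν * c))
    (a c : ℝ) (hfa : Dx f a c ≠ 0) (hfc : Dy f a c ≠ 0) :
    Dx (Dx (Dx f)) a c
        = Dx (Dx f) a c * (Dy (Dx f) a c / Dy f a c + Dx (Dx f) a c / Dx f a c) ∧
    Dy (Dx (Dx f)) a c
        = Dx (Dx f) a c * (Dy (Dy f) a c / Dy f a c + Dy (Dx f) a c / Dx f a c) ∧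
    Dy (Dy (Dx f)) a c
        = Dy (Dy f) a c * (Dx (Dx f) a c / Dx f a c + Dy (Dx f) a c / Dy f a c) ∧
    Dy (Dy (Dy f)) a c
        = Dy (Dy f) a c * (Dy (Dy f) a c / Dy f a c + Dy (Dx f) a c / Dx f a c) ∧
    Dx (Dx f) a c * Dy (Dy f) a c = (Dy (Dx f) a c)^2 := by
  have hG : ∀ a c, expSum m n μ ν a c ≠ 0 := fun a c => (hpos a c).ne'
  rw [Dx_eq_of_eq_log_expSum hG hf] at hfa ⊢
  rw [Dy_eq_of_eq_log_expSum hG hf] at hfc ⊢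
  simp only [Dx_const_mul, Dy_const_mul, Dx_softmaxFst hG, Dy_softmaxFst hG, Dy_softmaxSnd hG,
    Dx_softmaxFst_mul_softmaxSnd hG, Dy_softmaxFst_mul_softmaxSnd hG] at hfa hfc ⊢
  generalize softmaxFst m n μ ν a c = p at *
  generalize softmaxSnd m n μ ν a c = q at *
  simp only [mul_ne_zero_iff] at hfa hfc
  obtain ⟨⟨hs, hμ⟩, hp⟩ := hfa
  obtain ⟨⟨-, hν⟩, hq⟩ := hfc
  refine ⟨?_, ?_, ?_, ?_, ?_⟩ <;> field_simp <;> ring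

/-- `f(a,c) = s·ln(m·e^{μa} + n·e^{νc}) + K` satisfies the five
integrability conditions of Sect. 3.1 wherever `f_a ≠ 0` and `f_c ≠ 0`. -/
theorem integrability_conditions_of_log_exp_sum
    (s m n μ ν K : ℝ) (hs : s ≠ 0) (hm : m ≠ 0) (hn : n ≠ 0) (hμ : μ ≠ 0) (hν : ν ≠ 0)
    (f : ℝ → ℝ → ℝ)
    (hf : ∀ a c, f a c = s * Real.log (m * Real.exp (μ * a) + n * Real.exp (ν * c)) + K)
    (hpos : ∀ a c, 0 < m * Real.exp (μ * a) + n * Real.exp (ν * c))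
    (a c : ℝ) (hfa : Dx f a c ≠ 0) (hfc : Dy f a c ≠ 0) :
    Dx (Dx (Dx f)) a c
        = Dx (Dx f) a c * (Dy (Dx f) a c / Dy f a c + Dx (Dx f) a c / Dx f a c) ∧
    Dy (Dx (Dx f)) a c
        = Dx (Dx f) a c * (Dy (Dy f) a c / Dy f a c + Dy (Dx f) a c / Dx f a c) ∧
    Dy (Dy (Dx f)) a c
        = Dy (Dy f) a c * (Dx (Dx f) a c / Dx f a c + Dy (Dx f) a c / Dy f a c) ∧
    Dy (Dy (Dy f)) a c
        = Dy (Dy f) a c * (Dy (Dy f) a c / Dy f a c + Dy (Dx f) a c / Dx f a c) ∧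
    Dx (Dx f) a c * Dy (Dy f) a c = (Dy (Dx f) a c)^2 :=
  integrability_conditions_of_log_exp_sum_general s m n μ ν K f hf hpos a c hfa hfc
end

section
/- If f(p,q) is smooth with f_p, f_q nowhere zero and satisfies the four integrability conditions f_{ppp} = f_{pp}(f_{pq}/f_q + f_{pp}/f_p), f_{ppq} = f_{pp}(f_{qq}/f_q + f_{pq}/f_p), f_{pqq} = f_{qq}(f_{pq}/f_q + f_{pp}/f_p), f_{qqq} = f_{qq}(f_{qq}/f_q + f_{pq}/f_p), then both ratios f_{pp}/(f_p f_q) and f_{qq}/(f_p f_q) are constant on a connected domain. -/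
/-- Partial derivative with respect to the first variable. -/
noncomputable def Dp (f : ℝ → ℝ → ℝ) (p q : ℝ) : ℝ := deriv (fun x => f x q) p

/-- Partial derivative with respect to the second variable. -/
noncomputable def Dq (f : ℝ → ℝ → ℝ) (p q : ℝ) : ℝ := deriv (fun y => f p y) q

noncomputable def P1 (F : ℝ × ℝ → ℝ) (x : ℝ × ℝ) : ℝ := fderiv ℝ F x (1, 0)
noncomputable def P2 (F : ℝ × ℝ → ℝ) (x : ℝ × ℝ) : ℝ := fderiv ℝ F x (0, 1)

lemma P1_contDiff {F : ℝ × ℝ → ℝ} (hF : ContDiff ℝ (⊤ : ℕ∞) F) : ContDiff ℝ (⊤ : ℕ∞) (P1 F) :=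
  (ContinuousLinearMap.apply ℝ ℝ (((1:ℝ),(0:ℝ)))).contDiff.comp (hF.fderiv_right (by simp))

lemma P2_contDiff {F : ℝ × ℝ → ℝ} (hF : ContDiff ℝ (⊤ : ℕ∞) F) : ContDiff ℝ (⊤ : ℕ∞) (P2 F) :=
  (ContinuousLinearMap.apply ℝ ℝ (((0:ℝ),(1:ℝ)))).contDiff.comp (hF.fderiv_right (by simp))

lemma slice1 {G : ℝ × ℝ → ℝ} {p q : ℝ} (hG : DifferentiableAt ℝ G (p, q)) :
    HasDerivAt (fun x => G (x, q)) (P1 G (p, q)) p := by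
  have h := hG.hasFDerivAt.comp_hasDerivAt p ((hasDerivAt_id p).prodMk (hasDerivAt_const p q))
  simpa [P1, Function.comp_def] using h

lemma slice2 {G : ℝ × ℝ → ℝ} {p q : ℝ} (hG : DifferentiableAt ℝ G (p, q)) :
    HasDerivAt (fun y => G (p, y)) (P2 G (p, q)) q := by
  have h := hG.hasFDerivAt.comp_hasDerivAt q ((hasDerivAt_const q p).prodMk (hasDerivAt_id q))
  simpa [P2, Function.comp_def] using h

lemma P_comm {G : ℝ × ℝ → ℝ} (hG : ContDiff ℝ (⊤ : ℕ∞) G) (x : ℝ × ℝ) :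
    P1 (P2 G) x = P2 (P1 G) x := by
  have hdf : Differentiable ℝ (fderiv ℝ G) :=
    (hG.fderiv_right (m := (⊤ : ℕ∞)) (by simp)).differentiable (by simp)
  have hf'' : HasFDerivAt (fderiv ℝ G) (fderiv ℝ (fderiv ℝ G) x) x := (hdf x).hasFDerivAt
  have hsym := second_derivative_symmetric (f := G)
    (fun y => (hG.differentiable (by simp) y).hasFDerivAt) hf''
  have e2 : HasFDerivAt (P2 G)
      ((ContinuousLinearMap.apply ℝ ℝ (((0:ℝ),(1:ℝ)))).comp (fderiv ℝ (fderiv ℝ G) x)) x :=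
    (ContinuousLinearMap.apply ℝ ℝ (((0:ℝ),(1:ℝ)))).hasFDerivAt.comp x hf''
  have e1 : HasFDerivAt (P1 G)
      ((ContinuousLinearMap.apply ℝ ℝ (((1:ℝ),(0:ℝ)))).comp (fderiv ℝ (fderiv ℝ G) x)) x :=
    (ContinuousLinearMap.apply ℝ ℝ (((1:ℝ),(0:ℝ)))).hasFDerivAt.comp x hf''
  have := e2.fderiv
  have := e1.fderiv
  simp only [P1, P2, *]
  simpa using hsym (1,0) (0,1)

lemma Dp_eq_P1 {g : ℝ → ℝ → ℝ} {G : ℝ × ℝ → ℝ} (hg : ∀ p q, g p q = G (p, q))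
    (hG : ContDiff ℝ (⊤ : ℕ∞) G) (p q : ℝ) : Dp g p q = P1 G (p, q) := by
  have : (fun x => g x q) = fun x => G (x, q) := funext fun x => hg x q
  rw [Dp, this]
  exact (slice1 (hG.differentiable (by simp) (p, q))).deriv

lemma Dq_eq_P2 {g : ℝ → ℝ → ℝ} {G : ℝ × ℝ → ℝ} (hg : ∀ p q, g p q = G (p, q))
    (hG : ContDiff ℝ (⊤ : ℕ∞) G) (p q : ℝ) : Dq g p q = P2 G (p, q) := by
  have : (fun y => g p y) = fun y => G (p, y) := funext fun y => hg p y
  rw [Dq, this]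
  exact (slice2 (hG.differentiable (by simp) (p, q))).deriv

lemma partial1_div_mul {N A B : ℝ × ℝ → ℝ} (hN : ContDiff ℝ (⊤ : ℕ∞) N) (hA : ContDiff ℝ (⊤ : ℕ∞) A)
    (hB : ContDiff ℝ (⊤ : ℕ∞) B) (x : ℝ × ℝ) (hAx : A x ≠ 0) (hBx : B x ≠ 0) :
    P1 (fun y => N y / (A y * B y)) x =
      (P1 N x * (A x * B x) - N x * (P1 A x * B x + A x * P1 B x)) / (A x * B x) ^ 2 := by
  have hNx := hN.differentiable (by simp) x
  have hAx' := hA.differentiable (by simp) x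
  have hBx' := hB.differentiable (by simp) x
  have hne : A x * B x ≠ 0 := mul_ne_zero hAx hBx
  have hg : DifferentiableAt ℝ (fun y => N y / (A y * B y)) x :=
    by simp only [div_eq_mul_inv]; exact hNx.mul ((hAx'.mul hBx').inv hne)
  have h2 : HasDerivAt (fun t => N (t, x.2) / (A (t, x.2) * B (t, x.2)))
      ((P1 N x * (A x * B x) - N x * (P1 A x * B x + A x * P1 B x)) / (A x * B x) ^ 2) x.1 :=
    (slice1 hNx).div ((slice1 hAx').mul (slice1 hBx')) hne
  exact (slice1 hg).unique h2

lemma partial2_div_mul {N A B : ℝ × ℝ → ℝ} (hN : ContDiff ℝ (⊤ : ℕ∞) N) (hA : ContDiff ℝ (⊤ : ℕ∞) A)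
    (hB : ContDiff ℝ (⊤ : ℕ∞) B) (x : ℝ × ℝ) (hAx : A x ≠ 0) (hBx : B x ≠ 0) :
    P2 (fun y => N y / (A y * B y)) x =
      (P2 N x * (A x * B x) - N x * (P2 A x * B x + A x * P2 B x)) / (A x * B x) ^ 2 := by
  have hNx := hN.differentiable (by simp) x
  have hAx' := hA.differentiable (by simp) x
  have hBx' := hB.differentiable (by simp) x
  have hne : A x * B x ≠ 0 := mul_ne_zero hAx hBx
  have hg : DifferentiableAt ℝ (fun y => N y / (A y * B y)) x :=
    by simp only [div_eq_mul_inv]; exact hNx.mul ((hAx'.mul hBx').inv hne)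
  have h2 : HasDerivAt (fun t => N (x.1, t) / (A (x.1, t) * B (x.1, t)))
      ((P2 N x * (A x * B x) - N x * (P2 A x * B x + A x * P2 B x)) / (A x * B x) ^ 2) x.2 :=
    (slice2 hNx).div ((slice2 hAx').mul (slice2 hBx')) hne
  exact (slice2 hg).unique h2

lemma eq_on_of_locally_const {g : ℝ × ℝ → ℝ} {S : Set (ℝ × ℝ)}
    (hS : IsPreconnected S)
    (h : ∀ x ∈ S, ∃ U : Set (ℝ × ℝ), IsOpen U ∧ x ∈ U ∧ ∀ y ∈ U, g y = g x) :
    ∀ x ∈ S, ∀ y ∈ S, g x = g y := by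
  intro x hx y hy
  by_contra hne
  choose U hUo hUm hUc using h
  set A : Set (ℝ × ℝ) := ⋃ (z : ℝ × ℝ) (hz : z ∈ S) (_ : g z = g x), U z hz with hA
  set B : Set (ℝ × ℝ) := ⋃ (z : ℝ × ℝ) (hz : z ∈ S) (_ : g z ≠ g x), U z hz with hB
  have hAo : IsOpen A := isOpen_iUnion fun z => isOpen_iUnion fun hz =>
    isOpen_iUnion fun _ => hUo z hz
  have hBo : IsOpen B := isOpen_iUnion fun z => isOpen_iUnion fun hz =>
    isOpen_iUnion fun _ => hUo z hz
  have hcover : S ⊆ A ∪ B := by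
    intro z hz
    by_cases hgz : g z = g x
    · exact Or.inl (Set.mem_iUnion.2 ⟨z, Set.mem_iUnion.2 ⟨hz, Set.mem_iUnion.2 ⟨hgz, hUm z hz⟩⟩⟩)
    · exact Or.inr (Set.mem_iUnion.2 ⟨z, Set.mem_iUnion.2 ⟨hz, Set.mem_iUnion.2 ⟨hgz, hUm z hz⟩⟩⟩)
  have hAne : (S ∩ A).Nonempty :=
    ⟨x, hx, Set.mem_iUnion.2 ⟨x, Set.mem_iUnion.2 ⟨hx, Set.mem_iUnion.2 ⟨rfl, hUm x hx⟩⟩⟩⟩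
  have hBne : (S ∩ B).Nonempty :=
    ⟨y, hy, Set.mem_iUnion.2 ⟨y, Set.mem_iUnion.2 ⟨hy,
      Set.mem_iUnion.2 ⟨fun h' => hne h'.symm, hUm y hy⟩⟩⟩⟩
  obtain ⟨w, -, hwA, hwB⟩ := hS A B hAo hBo hcover hAne hBne
  obtain ⟨z1, hz1⟩ := Set.mem_iUnion.1 hwA
  obtain ⟨hz1S, hz1'⟩ := Set.mem_iUnion.1 hz1
  obtain ⟨hz1e, hz1m⟩ := Set.mem_iUnion.1 hz1'
  obtain ⟨z2, hz2⟩ := Set.mem_iUnion.1 hwB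
  obtain ⟨hz2S, hz2'⟩ := Set.mem_iUnion.1 hz2
  obtain ⟨hz2e, hz2m⟩ := Set.mem_iUnion.1 hz2'
  exact hz2e ((hUc z2 hz2S w hz2m).symm.trans ((hUc z1 hz1S w hz1m).trans hz1e))

lemma const_of_fderiv_zero_on {g : ℝ × ℝ → ℝ} {S : Set (ℝ × ℝ)}
    (hSo : IsOpen S) (hSc : IsPreconnected S)
    (hdiff : ∀ x ∈ S, DifferentiableAt ℝ g x) (hz : ∀ x ∈ S, fderiv ℝ g x = 0) :
    ∀ x ∈ S, ∀ y ∈ S, g x = g y := by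
  apply eq_on_of_locally_const hSc
  intro x hx
  obtain ⟨ε, hε, hball⟩ := Metric.isOpen_iff.1 hSo x hx
  refine ⟨Metric.ball x ε, Metric.isOpen_ball, Metric.mem_ball_self hε, fun y hy => ?_⟩
  refine (convex_ball x ε).is_const_of_fderivWithin_eq_zero
    (fun z hz' => (hdiff z (hball hz')).differentiableWithinAt) (fun z hz' => ?_) hy
    (Metric.mem_ball_self hε)
  rw [fderivWithin_of_isOpen Metric.isOpen_ball hz']
  exact hz z (hball hz')

lemma clm_eq_zero {D : ℝ × ℝ →L[ℝ] ℝ} (h1 : D (1, 0) = 0) (h2 : D (0, 1) = 0) : D = 0 := by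
  ext
  · simpa using h1
  · simpa using h2

/-- if a smooth `f(p,q)` with nowhere-vanishing `f_p, f_q` on a connected
open set satisfies the four integrability conditions of Sect. 3.3, then both ratios
`f_{pp}/(f_p f_q)` and `f_{qq}/(f_p f_q)` are constant on that set. -/
theorem ratios_constant_of_integrability_conditions
    (f : ℝ → ℝ → ℝ) (hf : ContDiff ℝ (⊤ : ℕ∞) (fun x : ℝ × ℝ => f x.1 x.2))
    (S : Set (ℝ × ℝ)) (hSopen : IsOpen S) (hSconn : IsConnected S)
    (hfp : ∀ x ∈ S, Dp f x.1 x.2 ≠ 0)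
    (hfq : ∀ x ∈ S, Dq f x.1 x.2 ≠ 0)
    (h1 : ∀ x ∈ S, Dp (Dp (Dp f)) x.1 x.2
        = Dp (Dp f) x.1 x.2 * (Dq (Dp f) x.1 x.2 / Dq f x.1 x.2
            + Dp (Dp f) x.1 x.2 / Dp f x.1 x.2))
    (h2 : ∀ x ∈ S, Dq (Dp (Dp f)) x.1 x.2
        = Dp (Dp f) x.1 x.2 * (Dq (Dq f) x.1 x.2 / Dq f x.1 x.2
            + Dq (Dp f) x.1 x.2 / Dp f x.1 x.2))
    (h3 : ∀ x ∈ S, Dq (Dq (Dp f)) x.1 x.2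
        = Dq (Dq f) x.1 x.2 * (Dq (Dp f) x.1 x.2 / Dq f x.1 x.2
            + Dp (Dp f) x.1 x.2 / Dp f x.1 x.2))
    (h4 : ∀ x ∈ S, Dq (Dq (Dq f)) x.1 x.2
        = Dq (Dq f) x.1 x.2 * (Dq (Dq f) x.1 x.2 / Dq f x.1 x.2
            + Dq (Dp f) x.1 x.2 / Dp f x.1 x.2)) :
    (∀ x ∈ S, ∀ y ∈ S,
      Dp (Dp f) x.1 x.2 / (Dp f x.1 x.2 * Dq f x.1 x.2)
        = Dp (Dp f) y.1 y.2 / (Dp f y.1 y.2 * Dq f y.1 y.2)) ∧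
    (∀ x ∈ S, ∀ y ∈ S,
      Dq (Dq f) x.1 x.2 / (Dp f x.1 x.2 * Dq f x.1 x.2)
        = Dq (Dq f) y.1 y.2 / (Dp f y.1 y.2 * Dq f y.1 y.2)) := by
  obtain ⟨F, hFc, hFeq⟩ :
      ∃ F : ℝ × ℝ → ℝ, ContDiff ℝ (⊤ : ℕ∞) F ∧ ∀ p q : ℝ, f p q = F (p, q) :=
    ⟨_, hf, fun _ _ => rfl⟩
  have hF1c : ContDiff ℝ (⊤ : ℕ∞) (P1 F) := P1_contDiff hFc
  have hF2c : ContDiff ℝ (⊤ : ℕ∞) (P2 F) := P2_contDiff hFc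
  have hF11c : ContDiff ℝ (⊤ : ℕ∞) (P1 (P1 F)) := P1_contDiff hF1c
  have hF21c : ContDiff ℝ (⊤ : ℕ∞) (P2 (P1 F)) := P2_contDiff hF1c
  have hF22c : ContDiff ℝ (⊤ : ℕ∞) (P2 (P2 F)) := P2_contDiff hF2c
  have E1 : ∀ x : ℝ × ℝ, Dp f x.1 x.2 = P1 F x := fun x => Dp_eq_P1 hFeq hFc x.1 x.2
  have E2 : ∀ x : ℝ × ℝ, Dq f x.1 x.2 = P2 F x := fun x => Dq_eq_P2 hFeq hFc x.1 x.2
  have E11 : ∀ x : ℝ × ℝ, Dp (Dp f) x.1 x.2 = P1 (P1 F) x :=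
    fun x => Dp_eq_P1 (fun p q => Dp_eq_P1 hFeq hFc p q) hF1c x.1 x.2
  have E21 : ∀ x : ℝ × ℝ, Dq (Dp f) x.1 x.2 = P2 (P1 F) x :=
    fun x => Dq_eq_P2 (fun p q => Dp_eq_P1 hFeq hFc p q) hF1c x.1 x.2
  have E22 : ∀ x : ℝ × ℝ, Dq (Dq f) x.1 x.2 = P2 (P2 F) x :=
    fun x => Dq_eq_P2 (fun p q => Dq_eq_P2 hFeq hFc p q) hF2c x.1 x.2
  have E111 : ∀ x : ℝ × ℝ, Dp (Dp (Dp f)) x.1 x.2 = P1 (P1 (P1 F)) x :=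
    fun x => Dp_eq_P1 (fun p q => Dp_eq_P1 (fun p q => Dp_eq_P1 hFeq hFc p q) hF1c p q)
      hF11c x.1 x.2
  have E211 : ∀ x : ℝ × ℝ, Dq (Dp (Dp f)) x.1 x.2 = P2 (P1 (P1 F)) x :=
    fun x => Dq_eq_P2 (fun p q => Dp_eq_P1 (fun p q => Dp_eq_P1 hFeq hFc p q) hF1c p q)
      hF11c x.1 x.2
  have E221 : ∀ x : ℝ × ℝ, Dq (Dq (Dp f)) x.1 x.2 = P2 (P2 (P1 F)) x :=
    fun x => Dq_eq_P2 (fun p q => Dq_eq_P2 (fun p q => Dp_eq_P1 hFeq hFc p q) hF1c p q)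
      hF21c x.1 x.2
  have E222 : ∀ x : ℝ × ℝ, Dq (Dq (Dq f)) x.1 x.2 = P2 (P2 (P2 F)) x :=
    fun x => Dq_eq_P2 (fun p q => Dq_eq_P2 (fun p q => Dq_eq_P2 hFeq hFc p q) hF2c p q)
      hF22c x.1 x.2
  have s0 : ∀ x : ℝ × ℝ, P1 (P2 F) x = P2 (P1 F) x := P_comm hFc
  have s0' : P1 (P2 F) = P2 (P1 F) := funext s0
  have s2 : ∀ x : ℝ × ℝ, P1 (P2 (P2 F)) x = P2 (P2 (P1 F)) x := by
    intro x
    rw [P_comm hF2c x, s0']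
  -- nonvanishing in P form
  have ha : ∀ x ∈ S, P1 F x ≠ 0 := fun x hx => by
    have := hfp x hx; rwa [E1 x] at this
  have hb : ∀ x ∈ S, P2 F x ≠ 0 := fun x hx => by
    have := hfq x hx; rwa [E2 x] at this
  constructor
  · -- f_pp / (f_p f_q) constant
    have key : ∀ x ∈ S, ∀ y ∈ S,
        (fun z => P1 (P1 F) z / (P1 F z * P2 F z)) x
          = (fun z => P1 (P1 F) z / (P1 F z * P2 F z)) y := by
      apply const_of_fderiv_zero_on hSopen hSconn.isPreconnected
      · intro x hx
        have hne : P1 F x * P2 F x ≠ 0 := mul_ne_zero (ha x hx) (hb x hx)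
        simp only [div_eq_mul_inv]
        exact (hF11c.differentiable (by simp) x).mul
          (((hF1c.differentiable (by simp) x).mul (hF2c.differentiable (by simp) x)).inv hne)
      · intro x hx
        apply clm_eq_zero
        · show P1 (fun z => P1 (P1 F) z / (P1 F z * P2 F z)) x = 0
          rw [partial1_div_mul hF11c hF1c hF2c x (ha x hx) (hb x hx)]
          have hh1 := h1 x hx
          rw [E111 x, E11 x, E21 x, E2 x, E1 x] at hh1
          rw [hh1, s0 x]
          have h1' := ha x hx; have h2' := hb x hx
          field_simp
          ring
        · show P2 (fun z => P1 (P1 F) z / (P1 F z * P2 F z)) x = 0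
          rw [partial2_div_mul hF11c hF1c hF2c x (ha x hx) (hb x hx)]
          have hh2 := h2 x hx
          rw [E211 x, E11 x, E22 x, E21 x, E2 x, E1 x] at hh2
          rw [hh2]
          have h1' := ha x hx; have h2' := hb x hx
          field_simp
          ring
    intro x hx y hy
    rw [E11 x, E1 x, E2 x, E11 y, E1 y, E2 y]
    exact key x hx y hy
  · -- f_qq / (f_p f_q) constant
    have key : ∀ x ∈ S, ∀ y ∈ S,
        (fun z => P2 (P2 F) z / (P1 F z * P2 F z)) x
          = (fun z => P2 (P2 F) z / (P1 F z * P2 F z)) y := by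
      apply const_of_fderiv_zero_on hSopen hSconn.isPreconnected
      · intro x hx
        have hne : P1 F x * P2 F x ≠ 0 := mul_ne_zero (ha x hx) (hb x hx)
        simp only [div_eq_mul_inv]
        exact (hF22c.differentiable (by simp) x).mul
          (((hF1c.differentiable (by simp) x).mul (hF2c.differentiable (by simp) x)).inv hne)
      · intro x hx
        apply clm_eq_zero
        · show P1 (fun z => P2 (P2 F) z / (P1 F z * P2 F z)) x = 0
          rw [partial1_div_mul hF22c hF1c hF2c x (ha x hx) (hb x hx)]
          have hh3 := h3 x hx
          rw [E221 x, E22 x, E21 x, E11 x, E2 x, E1 x] at hh3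
          rw [s2 x, hh3, s0 x]
          have h1' := ha x hx; have h2' := hb x hx
          field_simp
          ring
        · show P2 (fun z => P2 (P2 F) z / (P1 F z * P2 F z)) x = 0
          rw [partial2_div_mul hF22c hF1c hF2c x (ha x hx) (hb x hx)]
          have hh4 := h4 x hx
          rw [E222 x, E22 x, E21 x, E2 x, E1 x] at hh4
          rw [hh4]
          have h1' := ha x hx; have h2' := hb x hx
          field_simp
          ring
    intro x hx y hy
    rw [E22 x, E1 x, E2 x, E22 y, E1 y, E2 y]
    exact key x hx y hy
end
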